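/- Let G be an n-vertex graph and let H be a rank-p perturbation of G. Then G can be obtained from H by complementing on at most p+1 sets of vertices. Equivalently: every symmetric n×n matrix M over GF(2) of rank at most p whose effect on off-diagonal entries matters can be written, up to diagonal entries, as a sum of at most p+1 matrices of the form x xᵀ with x ∈ GF(2)ⁿ. -/

import Mathlib

variable {V : Type*}

open Classical in
/-- Local complementation at `v`: complement the induced subgraph on `N_G(v)`. -/
noncomputable def localComp (G : SimpleGraph V) (v : V) : SimpleGraph V where
  Adj x y := x ≠ y ∧ (if G.Adj v x ∧ G.Adj v y then ¬ G.Adj x y else G.Adj x y)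
  symm := by
    constructor
    intro x y ⟨hxy, h⟩
    refine ⟨hxy.symm, ?_⟩
    by_cases hc : G.Adj v x ∧ G.Adj v y
    · rw [if_pos hc] at h
      rw [if_pos ⟨hc.2, hc.1⟩]
      exact fun h' => h h'.symm
    · rw [if_neg hc] at h
      rw [if_neg (fun h' => hc ⟨h'.2, h'.1⟩)]
      exact h.symm
  loopless := ⟨fun x hx => hx.1 rfl⟩

/-- Toggle (add or remove) the edge `uv`. -/
def toggle (G : SimpleGraph V) (u v : V) : SimpleGraph V where
  Adj x y := x ≠ y ∧ Xor' (G.Adj x y) ((x = u ∧ y = v) ∨ (x = v ∧ y = u))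
  symm := by
    constructor
    intro x y ⟨hxy, h⟩
    refine ⟨hxy.symm, ?_⟩
    rw [G.adj_comm y x]
    change (_ ∧ ¬_) ∨ (_ ∧ ¬_) at h
    change (_ ∧ ¬_) ∨ (_ ∧ ¬_)
    tauto
  loopless := ⟨fun x hx => hx.1 rfl⟩

/-- Local equivalence: related by a sequence of local complementations. -/
def LocallyEquiv (G H : SimpleGraph V) : Prop :=
  Relation.ReflTransGen (fun A B => ∃ v, B = localComp A v) G H

/-- `CZle G H k` : there is a sequence `G = G₀, G₀', G₁, G₁', …, G_k, G_k' = H`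
with each `Gᵢ'` locally equivalent to `Gᵢ` and each `Gᵢ` (i ≥ 1) obtained from
`G_{i-1}'` by adding or removing a single edge. -/
inductive CZle : SimpleGraph V → SimpleGraph V → ℕ → Prop
  | base {G H : SimpleGraph V} : LocallyEquiv G H → CZle G H 0
  | step {G G' F H : SimpleGraph V} {k : ℕ} (u v : V) :
      LocallyEquiv G G' → u ≠ v → F = toggle G' u v → CZle F H k → CZle G H (k + 1)

/-- The CZ-distance between two graphs on the same vertex set. -/
noncomputable def czDist (G H : SimpleGraph V) : ℕ := sInf {k | CZle G H k}

/-- The CZ-distance of a graph: CZ-distance to the edgeless graph. -/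
noncomputable def cz (G : SimpleGraph V) : ℕ := czDist G ⊥

open Classical in
/-- Complementing on a vertex set `X`: replace the induced subgraph on `X` by its complement. -/
noncomputable def complOn (G : SimpleGraph V) (X : Set V) : SimpleGraph V :=
  SimpleGraph.fromRel (fun x y => if x ∈ X ∧ y ∈ X then ¬ G.Adj x y else G.Adj x y)

open Classical in
/-- The adjacency matrix over GF(2). -/
noncomputable def adjMat (G : SimpleGraph V) : Matrix V V (ZMod 2) :=
  fun x y => if G.Adj x y then 1 else 0

/-- `H` is a rank-`p` perturbation of `G`. -/
def IsRankPerturbation [Fintype V] (p : ℕ) (G H : SimpleGraph V) : Prop :=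
  ∃ M : Matrix V V (ZMod 2), M.IsSymm ∧ M.rank ≤ p ∧
    ∀ x y : V, x ≠ y → adjMat H x y = adjMat G x y + M x y

/-- `G` is a circle graph: the overlap graph of a family of closed intervals in `ℝ`
with pairwise distinct endpoints. -/
def IsCircleGraph (G : SimpleGraph V) : Prop :=
  ∃ l r : V → ℝ, (∀ v, l v < r v) ∧
    Function.Injective (fun p : V × Bool => if p.2 then r p.1 else l p.1) ∧
    ∀ x y, G.Adj x y ↔
      ((l x < l y ∧ l y < r x ∧ r x < r y) ∨ (l y < l x ∧ l x < r y ∧ r y < r x))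

/-- Two vertex sets are homogeneous: complete or anticomplete to each other. -/
def Homog (G : SimpleGraph V) (X Y : Finset V) : Prop :=
  (∀ x ∈ X, ∀ y ∈ Y, G.Adj x y) ∨ (∀ x ∈ X, ∀ y ∈ Y, ¬ G.Adj x y)

/-- Every part of the partition `P` has red degree (number of other parts it is
inhomogeneous to) at most `k`. -/
def RedDegLE [Fintype V] [DecidableEq V] (G : SimpleGraph V) (P : Finpartition (Finset.univ : Finset V))
    (k : ℕ) : Prop :=
  ∀ X ∈ P.parts, {Y : Finset V | Y ∈ P.parts ∧ Y ≠ X ∧ ¬ Homog G X Y}.ncard ≤ k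

/-- One contraction: merge two parts of the partition. -/
def MergeStep [Fintype V] [DecidableEq V]
    (P Q : Finpartition (Finset.univ : Finset V)) : Prop :=
  ∃ A B, A ∈ P.parts ∧ B ∈ P.parts ∧ A ≠ B ∧
    Q.parts = insert (A ∪ B) ((P.parts.erase A).erase B)

/-- `G` has twin-width at most `k`: there is a contraction (partition) sequence from
the discrete partition to the trivial one in which every partition has red degree at
most `k`. -/
def TwinWidthLE [Fintype V] [DecidableEq V] (G : SimpleGraph V) (k : ℕ) : Prop :=
  ∃ (m : ℕ) (seq : Fin (m + 1) → Finpartition (Finset.univ : Finset V)),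
    (∀ X ∈ (seq 0).parts, X.card = 1) ∧
    (seq (Fin.last m)).parts.card ≤ 1 ∧
    (∀ i : Fin m, MergeStep (seq i.castSucc) (seq i.succ)) ∧
    (∀ i, RedDegLE G (seq i) k)

/-- `H` is obtained from `G` (in which `u` is isolated) by adding all edges between `u`
and `N_G(v)`, possibly adding the edge `uv`, and then adding at most `k` additional
edges incident to `u`. -/
def ExtendStep (k : ℕ) (G H : SimpleGraph V) (u v : V) : Prop :=
  u ≠ v ∧ G.neighborSet u = ∅ ∧
  (∀ x y, x ≠ u → y ≠ u → (H.Adj x y ↔ G.Adj x y)) ∧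
  G.neighborSet v ⊆ H.neighborSet u ∧
  ∃ T : Finset V, T.card ≤ k ∧ H.neighborSet u ⊆ G.neighborSet v ∪ {v} ∪ ↑T

/-!
Over `GF(2)`, complementing on the support of `x` adds `x xᵀ` to the adjacency matrix off the
diagonal, so it suffices to write a symmetric `M` of rank `r` off the diagonal as a sum of at most
`r + 1` matrices `x xᵀ`. This is done by pivoting. A nonzero diagonal entry `M i i` splits off
`(M i)(M i)ᵀ` and lowers the rank by one. If the diagonal vanishes, an entry `M i a = 1` splits off
the hyperbolic pair `w uᵀ + u wᵀ` (with `u = M i`, `w = M a`) and lowers the rank by two; such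
alternating matrices are decomposed exactly, into an odd number of vectors with zero sum.
-/

open Matrix

namespace Matrix

variable {m n K : Type*} [Fintype n] [Field K]

theorem rank_lt_rank_of_ker_lt {A B : Matrix m n K}
    (h : LinearMap.ker A.mulVecLin < LinearMap.ker B.mulVecLin) : B.rank < A.rank := by
  have hA := LinearMap.finrank_range_add_finrank_ker A.mulVecLin
  have hB := LinearMap.finrank_range_add_finrank_ker B.mulVecLin
  have := Submodule.finrank_lt_finrank_of_lt h
  unfold Matrix.rank
  omega

/-- Wedderburn's rank-one reduction: `e_j` enters the kernel and nothing leaves it. -/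
theorem rank_sub_vecMulVec_col_row_lt (M : Matrix m n K) {i : m} {j : n} (h : M i j ≠ 0) :
    (M - (M i j)⁻¹ • vecMulVec (M.col j) (M.row i)).rank < M.rank := by
  classical
  set M' := M - (M i j)⁻¹ • vecMulVec (M.col j) (M.row i)
  have hM' : ∀ z, M' *ᵥ z = M *ᵥ z - ((M i j)⁻¹ * (M *ᵥ z) i) • M.col j := fun z => by
    simp only [M', sub_mulVec, smul_mulVec, vecMulVec_mulVec, op_smul_eq_smul, smul_smul]
    rfl
  refine rank_lt_rank_of_ker_lt (SetLike.lt_iff_le_and_exists.mpr ⟨fun z hz => ?_, ?_⟩)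
  · rw [LinearMap.mem_ker, mulVecLin_apply] at hz ⊢
    rw [hM', hz, Pi.zero_apply, mul_zero, zero_smul, sub_zero]
  · refine ⟨Pi.single j 1, ?_, fun hker => h ?_⟩
    · rw [LinearMap.mem_ker, mulVecLin_apply, hM', mulVec_single_one, col_apply,
        inv_mul_cancel₀ h, one_smul, sub_self]
    · simpa [mulVec_single_one] using congrFun (hker : M *ᵥ Pi.single j 1 = 0) i

/-- Two successive pivots, at `(i, a)` and then at `(a, i)`. -/
theorem IsSymm.rank_sub_hyperbolic_add_two_le {M : Matrix n n K} (hs : M.IsSymm) {i a : n}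
    (hia : M i a ≠ 0) (hi : M i i = 0) (ha : M a a = 0) :
    (M - (M i a)⁻¹ • (vecMulVec (M a) (M i) + vecMulVec (M i) (M a))).rank + 2 ≤ M.rank := by
  set M₁ := M - (M i a)⁻¹ • vecMulVec (M.col a) (M.row i)
  have hM₁ : ∀ x y, M₁ x y = M x y - (M i a)⁻¹ * (M a x * M i y) := fun x y => by
    simp [M₁, vecMulVec_apply, hs.apply]
  have hM₁ai : M₁ a i = M i a := by rw [hM₁, ha, hs.apply, zero_mul, mul_zero, sub_zero]
  have h₁ : M₁.rank < M.rank := rank_sub_vecMulVec_col_row_lt M hia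
  have h₂ := rank_sub_vecMulVec_col_row_lt M₁ (hM₁ai ▸ hia)
  have hM₂ : M₁ - (M₁ a i)⁻¹ • vecMulVec (M₁.col i) (M₁.row a)
      = M - (M i a)⁻¹ • (vecMulVec (M a) (M i) + vecMulVec (M i) (M a)) := by
    ext x y
    simp only [hM₁ai, hM₁, sub_apply, smul_apply, add_apply, vecMulVec_apply, col_apply, row_apply,
      hs.apply, hi, ha, zero_mul, mul_zero, sub_zero, smul_eq_mul, smul_add]
    ring
  rw [hM₂] at h₂
  omega

end Matrix

section OuterSum

variable {R : Type*}

def outerSum [Mul R] [AddMonoid R] (L : List (V → R)) : Matrix V V R :=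
  (L.map fun v => vecMulVec v v).sum

@[simp]
theorem outerSum_nil [Mul R] [AddMonoid R] : outerSum ([] : List (V → R)) = 0 := rfl

@[simp]
theorem outerSum_cons [Mul R] [AddMonoid R] (v : V → R) (L : List (V → R)) :
    outerSum (v :: L) = vecMulVec v v + outerSum L := List.sum_cons

theorem outerSum_map_add [CommSemiring R] (L : List (V → R)) (w : V → R) :
    outerSum (L.map (· + w)) =
      outerSum L + vecMulVec L.sum w + vecMulVec w L.sum + L.length • vecMulVec w w := by
  induction L with
  | nil => simp
  | cons v L ih =>
    simp only [List.map_cons, outerSum_cons, ih, List.sum_cons, List.length_cons, succ_nsmul,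
      add_vecMulVec, vecMulVec_add]
    abel

theorem outerSum_map_add_of_odd [CommRing R] [CharP R 2] {L : List (V → R)} (hodd : Odd L.length)
    (hsum : L.sum = 0) (w : V → R) :
    outerSum (L.map (· + w)) = outerSum L + vecMulVec w w := by
  rw [outerSum_map_add, hsum, zero_vecMulVec, vecMulVec_zero, ← Nat.cast_smul_eq_nsmul R,
    CharTwo.natCast_eq_ite, if_neg (Nat.not_even_iff_odd.mpr hodd), one_smul, add_zero, add_zero]

theorem sum_map_add_of_odd [CommRing R] [CharP R 2] {L : List (V → R)} (hodd : Odd L.length)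
    (w : V → R) : (L.map (· + w)).sum = L.sum + w := by
  rw [List.sum_map_add, List.map_id', List.map_const', List.sum_replicate,
    ← Nat.cast_smul_eq_nsmul R, CharTwo.natCast_eq_ite, if_neg (Nat.not_even_iff_odd.mpr hodd),
    one_smul]

end OuterSum

section ZModTwo

variable [Fintype V]

/-- Odd length and zero sum make the decomposition invariant, up to `w wᵀ`, under translating
every vector by `w` (`outerSum_map_add_of_odd`); this absorbs the hyperbolic pair
`w uᵀ + u wᵀ = u uᵀ + (u + w)(u + w)ᵀ + w wᵀ` with only two new vectors. -/
theorem exists_outerSum_eq_of_diag_eq_zero (k : ℕ) {M : Matrix V V (ZMod 2)} (hs : M.IsSymm)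
    (hd : ∀ x, M x x = 0) (hr : M.rank ≤ k) :
    ∃ L : List (V → ZMod 2), L.length ≤ k + 1 ∧ Odd L.length ∧ L.sum = 0 ∧ outerSum L = M := by
  induction k using Nat.strong_induction_on generalizing M with
  | _ k ih =>
  by_cases hM : M = 0
  · exact ⟨[0], by simp, by simp, by simp, by simp [hM]⟩
  obtain ⟨i, a, hia⟩ : ∃ i a, M i a ≠ 0 := by
    by_contra! h
    exact hM (Matrix.ext h)
  set u := M i
  set w := M a
  set M₂ := M - (vecMulVec w u + vecMulVec u w)
  have hr₂ : M₂.rank + 2 ≤ M.rank := by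
    have hia₁ : M i a = 1 := Fin.eq_one_of_ne_zero _ hia
    simpa only [hia₁, inv_one, one_smul] using hs.rank_sub_hyperbolic_add_two_le hia (hd i) (hd a)
  have hs₂ : M₂.IsSymm := hs.sub (by simp [IsSymm, add_comm])
  have hd₂ : ∀ x, M₂ x x = 0 := fun x => by
    simp [M₂, hd, vecMulVec_apply, mul_comm (w x), CharTwo.add_self_eq_zero]
  obtain ⟨L, hlen, hodd, hsum, hL⟩ := ih (k - 2) (by omega) hs₂ hd₂ (by omega)
  refine ⟨u :: (u + w) :: L.map (· + w), ?_, by simpa [Nat.odd_add_one] using hodd, ?_, ?_⟩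
  · simp only [List.length_cons, List.length_map]
    omega
  · rw [List.sum_cons, List.sum_cons, sum_map_add_of_odd hodd, hsum]
    ext x
    simp only [Pi.add_apply, zero_add, Pi.zero_apply]
    linear_combination (u x + w x) * (CharTwo.two_eq_zero : (2 : ZMod 2) = 0)
  · rw [outerSum_cons, outerSum_cons, outerSum_map_add_of_odd hodd hsum, hL]
    ext x y
    simp only [M₂, Matrix.add_apply, Matrix.sub_apply, vecMulVec_apply, Pi.add_apply]
    linear_combination (u x * u y + w x * w y) * (CharTwo.two_eq_zero : (2 : ZMod 2) = 0)

theorem exists_outerSum_offDiag_eq (p : ℕ) {M : Matrix V V (ZMod 2)} (hs : M.IsSymm)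
    (hr : M.rank ≤ p) :
    ∃ L : List (V → ZMod 2), L.length ≤ p + 1 ∧ ∀ x y, x ≠ y → outerSum L x y = M x y := by
  induction p using Nat.strong_induction_on generalizing M with
  | _ p ih =>
  by_cases hd : ∀ x, M x x = 0
  · obtain ⟨L, hlen, -, -, hL⟩ := exists_outerSum_eq_of_diag_eq_zero p hs hd hr
    exact ⟨L, hlen, fun x y _ => by rw [hL]⟩
  obtain ⟨i, hi⟩ := not_forall.mp hd
  set v := M i
  set M₁ := M - vecMulVec v v
  have hr₁ : M₁.rank < M.rank := by
    have hi₁ : M i i = 1 := Fin.eq_one_of_ne_zero _ hi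
    have hcol : M.col i = v := congrFun hs i
    have := rank_sub_vecMulVec_col_row_lt M hi
    rwa [hi₁, inv_one, one_smul, hcol] at this
  have hs₁ : M₁.IsSymm := hs.sub (by simp [IsSymm])
  obtain ⟨L, hlen, hL⟩ := ih (p - 1) (by omega) hs₁ (by omega)
  refine ⟨v :: L, by simp only [List.length_cons]; omega, fun x y hxy => ?_⟩
  rw [outerSum_cons, Matrix.add_apply, hL x y hxy]
  exact add_sub_cancel _ _

end ZModTwo

theorem indicator_support_one_eq (v : V → ZMod 2) : (Function.support v).indicator 1 = v := by
  ext x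
  by_cases hx : v x = 0
  · simp [hx]
  · have hx₁ : v x = 1 := Fin.eq_one_of_ne_zero _ hx
    rw [Set.indicator_of_mem (Function.mem_support.mpr hx), Pi.one_apply, hx₁]

theorem adjMat_complOn_of_ne (G : SimpleGraph V) (X : Set V) {x y : V} (h : x ≠ y) :
    adjMat (complOn G X) x y = adjMat G x y + X.indicator 1 x * X.indicator 1 y := by
  classical
  by_cases hx : x ∈ X <;> by_cases hy : y ∈ X <;> by_cases hG : G.Adj x y <;>
    simp [adjMat, complOn, h, hx, hy, hG, G.adj_comm y x, CharTwo.add_self_eq_zero]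

theorem adjMat_foldl_complOn_of_ne (l : List (Set V)) (G : SimpleGraph V) {x y : V} (h : x ≠ y) :
    adjMat (l.foldl complOn G) x y
      = adjMat G x y + outerSum (l.map fun X => X.indicator 1) x y := by
  induction l generalizing G with
  | nil => simp
  | cons X l ih =>
    rw [List.foldl_cons, ih, adjMat_complOn_of_ne _ _ h, List.map_cons, outerSum_cons,
      Matrix.add_apply, vecMulVec_apply, add_assoc]

theorem eq_of_adjMat_offDiag_eq {G H : SimpleGraph V}
    (h : ∀ x y, x ≠ y → adjMat G x y = adjMat H x y) : G = H := by
  ext x y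
  by_cases hxy : x = y
  · simp [hxy]
  · have := h x y hxy
    by_cases hG : G.Adj x y <;> by_cases hH : H.Adj x y <;> simp_all [adjMat]

theorem stmt10 [Fintype V] (G H : SimpleGraph V) (p : ℕ)
    (h : IsRankPerturbation p G H) :
    ∃ l : List (Set V), l.length ≤ p + 1 ∧ G = l.foldl complOn H := by
  obtain ⟨M, hs, hr, hGH⟩ := h
  obtain ⟨L, hlen, hL⟩ := exists_outerSum_offDiag_eq p hs hr
  refine ⟨L.map Function.support, by simpa using hlen, eq_of_adjMat_offDiag_eq fun x y hxy => ?_⟩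
  rw [adjMat_foldl_complOn_of_ne _ _ hxy, List.map_map, Function.comp_def]
  simp only [indicator_support_one_eq, List.map_id', hL x y hxy, hGH x y hxy, add_assoc,
    CharTwo.add_self_eq_zero, add_zero]
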